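/- arXiv:2411.11336 — 2 statements merged into one kernel-verified Lean document; each statement's English description precedes it below -/
import Mathlib

section
/- If P is a complex polynomial of degree n having no zeros in the open unit disk, then for every R > 1, the maximum of |P(Rz)| over |z|=1 is at most ((R^n+1)/2) times the maximum of |P(z)| over |z|=1. -/
/-!
Let `Q(z) = zⁿ · conj (P (1 / conj z))`. Factoring `P = c ∏ (z - a)` with all `‖a‖ ≥ 1`, the
inequality `‖w - a‖ ≤ ‖1 - conj w · a‖` for `‖a‖, ‖w‖ ≥ 1` gives `‖P w‖ ≤ ‖Q w‖` outside the
disk. If `M` is the maximum of `‖P‖` on the circle and `‖c‖ > M`, then `P - c` has no zeros in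
the disk by the maximum modulus principle; rotating `c` so that `conj c · wⁿ` points in the
direction of `Q w`, the same inequality for `P - c` reads `‖P w‖ - ‖c‖ ≤ ‖c‖ ‖w‖ⁿ - ‖Q w‖`.
Letting `‖c‖ → M` yields `‖P w‖ + ‖Q w‖ ≤ M (‖w‖ⁿ + 1)`, hence `2 ‖P w‖ ≤ M (Rⁿ + 1)`.
-/

open Polynomial Metric Set

noncomputable def maxSphere (P : Polynomial ℂ) : ℝ :=
  sSup ((fun w => ‖P.eval w‖) '' sphere (0:ℂ) 1)

noncomputable def minSphere (P : Polynomial ℂ) : ℝ :=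
  sInf ((fun w => ‖P.eval w‖) '' sphere (0:ℂ) 1)

open ComplexConjugate

theorem norm_sub_le_norm_one_sub_conj_mul {a w : ℂ} (ha : 1 ≤ ‖a‖) (hw : 1 ≤ ‖w‖) :
    ‖w - a‖ ≤ ‖1 - conj w * a‖ := by
  have key : ‖1 - conj w * a‖ ^ 2 - ‖w - a‖ ^ 2 = (‖a‖ ^ 2 - 1) * (‖w‖ ^ 2 - 1) := by
    simp only [Complex.sq_norm, Complex.normSq_apply, Complex.sub_re, Complex.sub_im,
      Complex.mul_re, Complex.mul_im, Complex.conj_re, Complex.conj_im, Complex.one_re,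
      Complex.one_im]
    ring
  have : ‖w - a‖ ^ 2 ≤ ‖1 - conj w * a‖ ^ 2 := by
    nlinarith [mul_nonneg (sub_nonneg.2 (one_le_pow₀ (n := 2) ha))
      (sub_nonneg.2 (one_le_pow₀ (n := 2) hw))]
  exact (pow_le_pow_iff_left₀ (norm_nonneg _) (norm_nonneg _) two_ne_zero).1 this

theorem norm_multiset_prod_sub_le {s : Multiset ℂ} (hs : ∀ a ∈ s, 1 ≤ ‖a‖) {w : ℂ}
    (hw : 1 ≤ ‖w‖) :
    ‖(s.map (w - ·)).prod‖ ≤ ‖w‖ ^ Multiset.card s * ‖(s.map ((conj w)⁻¹ - ·)).prod‖ := by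
  induction s using Multiset.induction_on with
  | empty => simp
  | cons a s ih =>
    simp only [Multiset.mem_cons, forall_eq_or_imp] at hs
    have hw0 : conj w ≠ 0 := by simpa using norm_pos_iff.1 (by linarith)
    have ha : ‖w - a‖ ≤ ‖w‖ * ‖(conj w)⁻¹ - a‖ := by
      calc ‖w - a‖ ≤ ‖1 - conj w * a‖ := norm_sub_le_norm_one_sub_conj_mul hs.1 hw
        _ = ‖w‖ * ‖(conj w)⁻¹ - a‖ := by
          rw [← Complex.norm_conj w, ← norm_mul, mul_sub, mul_inv_cancel₀ hw0]
    simp only [Multiset.map_cons, Multiset.prod_cons, Multiset.card_cons, norm_mul, pow_succ]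
    calc ‖w - a‖ * ‖(s.map (w - ·)).prod‖
        ≤ (‖w‖ * ‖(conj w)⁻¹ - a‖) * (‖w‖ ^ Multiset.card s * ‖(s.map ((conj w)⁻¹ - ·)).prod‖) :=
          mul_le_mul ha (ih hs.2) (norm_nonneg _) (by positivity)
      _ = _ := by ring

noncomputable def conjReciprocal (n : ℕ) (P : ℂ[X]) (z : ℂ) : ℂ :=
  z ^ n * conj (P.eval (conj z)⁻¹)

theorem norm_eval_le_norm_conjReciprocal {n : ℕ} {P : ℂ[X]} (hdeg : P.natDegree ≤ n)
    (hP : ∀ z : ℂ, ‖z‖ < 1 → P.eval z ≠ 0) {w : ℂ} (hw : 1 ≤ ‖w‖) :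
    ‖P.eval w‖ ≤ ‖conjReciprocal n P w‖ := by
  have hroots : ∀ a ∈ P.roots, 1 ≤ ‖a‖ := fun a ha =>
    not_lt.1 fun h => hP a h (isRoot_of_mem_roots ha)
  have heval : ∀ z, P.eval z = P.leadingCoeff * (P.roots.map (z - ·)).prod := by
    intro z
    conv_lhs =>
      rw [← C_leadingCoeff_mul_prod_multiset_X_sub_C (IsAlgClosed.card_roots_eq_natDegree (p := P))]
    simp [eval_multiset_prod, Multiset.map_map]
  rw [conjReciprocal, heval, heval, norm_mul, norm_mul, Complex.norm_conj, norm_mul, norm_pow]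
  calc ‖P.leadingCoeff‖ * ‖(P.roots.map (w - ·)).prod‖
      ≤ ‖P.leadingCoeff‖ * (‖w‖ ^ P.natDegree * ‖(P.roots.map ((conj w)⁻¹ - ·)).prod‖) := by
        rw [← IsAlgClosed.card_roots_eq_natDegree]
        exact mul_le_mul_of_nonneg_left (norm_multiset_prod_sub_le hroots hw) (norm_nonneg _)
    _ ≤ ‖P.leadingCoeff‖ * (‖w‖ ^ n * ‖(P.roots.map ((conj w)⁻¹ - ·)).prod‖) := by
        gcongr
    _ = _ := by ring

theorem conjReciprocal_sub_C (n : ℕ) (P : ℂ[X]) (c z : ℂ) :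
    conjReciprocal n (P - C c) z = conjReciprocal n P z - conj c * z ^ n := by
  simp only [conjReciprocal, eval_sub, eval_C, map_sub]
  ring

theorem bddAbove_norm_eval_image_sphere (P : ℂ[X]) :
    BddAbove ((fun w => ‖P.eval w‖) '' sphere (0 : ℂ) 1) :=
  (isCompact_sphere 0 1).bddAbove_image (continuous_norm.comp P.continuous).continuousOn

theorem norm_eval_le_maxSphere_of_norm_eq_one (P : ℂ[X]) {z : ℂ} (hz : ‖z‖ = 1) :
    ‖P.eval z‖ ≤ maxSphere P :=
  le_csSup (bddAbove_norm_eval_image_sphere P) ⟨z, by simpa using hz, rfl⟩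

theorem norm_eval_le_maxSphere (P : ℂ[X]) {z : ℂ} (hz : ‖z‖ ≤ 1) :
    ‖P.eval z‖ ≤ maxSphere P := by
  refine Complex.norm_le_of_forall_mem_frontier_norm_le (f := P.eval) (U := ball 0 1)
    isBounded_ball P.differentiable.diffContOnCl (fun w hw => ?_) ?_
  · rw [frontier_ball (0 : ℂ) one_ne_zero, mem_sphere_zero_iff_norm] at hw
    exact norm_eval_le_maxSphere_of_norm_eq_one P hw
  · rwa [closure_ball (0 : ℂ) one_ne_zero, mem_closedBall_zero_iff]

theorem maxSphere_nonneg (P : ℂ[X]) : 0 ≤ maxSphere P :=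
  (norm_nonneg _).trans (norm_eval_le_maxSphere_of_norm_eq_one P norm_one)

theorem norm_conjReciprocal_le (n : ℕ) (P : ℂ[X]) {w : ℂ} (hw : 1 ≤ ‖w‖) :
    ‖conjReciprocal n P w‖ ≤ ‖w‖ ^ n * maxSphere P := by
  rw [conjReciprocal, norm_mul, norm_pow, Complex.norm_conj]
  gcongr
  refine norm_eval_le_maxSphere P ?_
  rw [norm_inv, Complex.norm_conj]
  exact inv_le_one_of_one_le₀ hw

theorem norm_eval_add_norm_conjReciprocal_le {n : ℕ} {P : ℂ[X]} (hdeg : P.natDegree ≤ n)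
    {w : ℂ} (hw : 1 ≤ ‖w‖) :
    ‖P.eval w‖ + ‖conjReciprocal n P w‖ ≤ (‖w‖ ^ n + 1) * maxSphere P := by
  have hw0 : w ≠ 0 := norm_pos_iff.1 (by linarith)
  set q := conjReciprocal n P w
  have hq : ‖q‖ ≤ ‖w‖ ^ n * maxSphere P := norm_conjReciprocal_le n P hw
  have hK : 0 < ‖w‖ ^ n + 1 := by positivity
  suffices key : ∀ s, maxSphere P < s → ‖P.eval w‖ + ‖q‖ ≤ (‖w‖ ^ n + 1) * s by
    rw [← div_le_iff₀' hK]
    exact le_of_forall_gt_imp_ge_of_dense fun s hs => (div_le_iff₀' hK).2 (key s hs)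
  intro s hs
  set u := Complex.exp (q.arg * Complex.I)
  set c := conj (((s * ‖w‖ ^ n : ℝ) : ℂ) * u / w ^ n)
  have hu : ‖u‖ = 1 := Complex.norm_exp_ofReal_mul_I _
  have hs0 : 0 < s := (maxSphere_nonneg P).trans_lt hs
  have hc : ‖c‖ = s := by
    simp [c, hu, norm_pow, hs0.le, (pow_pos (norm_pos_iff.2 hw0) n).ne']
  have hcq : conj c * w ^ n = ((s * ‖w‖ ^ n : ℝ) : ℂ) * u := by
    simp only [c, Complex.conj_conj]
    field_simp
  have hF : ∀ z : ℂ, ‖z‖ < 1 → (P - C c).eval z ≠ 0 := by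
    intro z hz h
    rw [eval_sub, eval_C, sub_eq_zero] at h
    have := norm_eval_le_maxSphere P hz.le
    rw [h, hc] at this
    linarith
  have hFw := norm_eval_le_norm_conjReciprocal (natDegree_sub_C.trans_le hdeg) hF hw
  have hQF : conjReciprocal n (P - C c) w = ((‖q‖ - s * ‖w‖ ^ n : ℝ) : ℂ) * u := by
    rw [conjReciprocal_sub_C, hcq]
    push_cast
    linear_combination (Complex.norm_mul_exp_arg_mul_I q).symm
  have hq' : ‖q‖ - s * ‖w‖ ^ n ≤ 0 := by nlinarith [pow_nonneg (norm_nonneg w) n]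
  rw [hQF, norm_mul, hu, mul_one, Complex.norm_real, Real.norm_eq_abs, abs_of_nonpos hq'] at hFw
  have hPw : ‖P.eval w‖ - s ≤ ‖(P - C c).eval w‖ := by
    rw [eval_sub, eval_C, ← hc]
    exact norm_sub_norm_le _ _
  linarith

theorem stmt_3 (n : ℕ) (P : Polynomial ℂ) (hP : P.natDegree = n)
    (hz : ∀ z : ℂ, ‖z‖ < 1 → P.eval z ≠ 0) (R : ℝ) (hR : 1 < R) :
    ∀ z : ℂ, ‖z‖ = 1 →
      ‖P.eval (R * z)‖ ≤ (R ^ n + 1) / 2 * maxSphere P := by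
  intro z hz1
  have hRz : ‖(R : ℂ) * z‖ = R := by
    rw [norm_mul, hz1, mul_one, Complex.norm_real, Real.norm_of_nonneg (by linarith)]
  have hw : 1 ≤ ‖(R : ℂ) * z‖ := by rw [hRz]; exact hR.le
  have hsum := norm_eval_add_norm_conjReciprocal_le hP.le hw
  have hPQ := norm_eval_le_norm_conjReciprocal hP.le hz hw
  rw [hRz] at hsum
  linarith
end

section
/- Let P be a polynomial of degree n with no zeros in the open unit disk. Then for every β ∈ ℂ with |β| ≤ 1, R > 1, a with |a| ≤ 1, and z with |z| ≥ 1: |(1+az)[RP'(Rz) − βP'(z)] − n a [P(Rz) − βP(z)]| ≤ ((n|R^n − β||z|^{n−1} + n|1−β||a|)/2) · max_{|w|=1}|P(w)|. -/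
/-!
Write `T f` for the left-hand side and `M = maxSphere P`. Up to the factor `-a`, `T f (z)` is the
polar derivative with respect to `-1/a` of `W = f(R ·) - β f`. If `f` has degree `n ≥ 1` and no
zeros outside the closed unit disk, then neither has `W` (`|f(v)| < |f(R v)|` for `|v| > 1`), so by
Laguerre's theorem `T f (z) ≠ 0` for `|a| < 1 < |z|`. A Rouché-type argument upgrades this to:
`|f| ≤ |h|` outside the disk implies `|T f (z)| ≤ |T h (z)|`. Applied to the conjugate reciprocal
`P* = zⁿ conj (P (1 / conj z))` and to `M zⁿ` it gives `|T P| ≤ |T P*|` and `|T P| ≤ M |T zⁿ|`;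
applied to `P* - μ` with `|μ| > M` and a suitably chosen phase it gives
`|T P| + |T P*| ≤ M (|T zⁿ| + |T 1|)`, and `|T zⁿ| = n |Rⁿ - β| |z|ⁿ⁻¹`, `|T 1| = n |1 - β| |a|`.
Continuity extends the bound from `|a| < 1 < |z|` to `|a| ≤ 1 ≤ |z|`.
-/

open Polynomial Metric Set

open scoped ComplexConjugate

theorem norm_multiset_prod {α : Type*} [NormedField α] (s : Multiset α) :
    ‖s.prod‖ = (s.map norm).prod := by
  simpa using map_multiset_prod (normHom : α →*₀ ℝ) s

theorem norm_one_sub_conj_mul_sq (v ζ : ℂ) :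
    ‖1 - conj v * ζ‖ ^ 2 = ‖v - ζ‖ ^ 2 + (‖v‖ ^ 2 - 1) * (‖ζ‖ ^ 2 - 1) := by
  simp only [← Complex.normSq_eq_norm_sq, Complex.normSq_apply, Complex.sub_re, Complex.sub_im,
    Complex.one_re, Complex.one_im, Complex.mul_re, Complex.mul_im, Complex.conj_re,
    Complex.conj_im]
  ring

theorem norm_sub_le_norm_one_sub_conj_mul_s17 {v ζ : ℂ} (hv : 1 ≤ ‖v‖) (hζ : 1 ≤ ‖ζ‖) :
    ‖v - ζ‖ ≤ ‖1 - conj v * ζ‖ := by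
  refine (sq_le_sq₀ (norm_nonneg _) (norm_nonneg _)).mp ?_
  rw [norm_one_sub_conj_mul_sq]
  have : 0 ≤ (‖v‖ ^ 2 - 1) * (‖ζ‖ ^ 2 - 1) := mul_nonneg (by nlinarith) (by nlinarith)
  linarith

theorem norm_one_sub_conj_mul_le_norm_sub {v ζ : ℂ} (hv : 1 ≤ ‖v‖) (hζ : ‖ζ‖ ≤ 1) :
    ‖1 - conj v * ζ‖ ≤ ‖v - ζ‖ := by
  refine (sq_le_sq₀ (norm_nonneg _) (norm_nonneg _)).mp ?_
  rw [norm_one_sub_conj_mul_sq]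
  have : (‖v‖ ^ 2 - 1) * (‖ζ‖ ^ 2 - 1) ≤ 0 :=
    mul_nonpos_of_nonneg_of_nonpos (by nlinarith) (by nlinarith [norm_nonneg ζ])
  linarith

theorem norm_one_sub_conj_mul_lt_norm_sub {v ζ : ℂ} (hv : 1 < ‖v‖) (hζ : ‖ζ‖ < 1) :
    ‖1 - conj v * ζ‖ < ‖v - ζ‖ := by
  refine (sq_lt_sq₀ (norm_nonneg _) (norm_nonneg _)).mp ?_
  rw [norm_one_sub_conj_mul_sq]
  have : (‖v‖ ^ 2 - 1) * (‖ζ‖ ^ 2 - 1) < 0 :=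
    mul_neg_of_pos_of_neg (by nlinarith) (by nlinarith [norm_nonneg ζ])
  linarith

theorem norm_sub_lt_norm_mul_sub {R : ℝ} (hR : 1 < R) {v ζ : ℂ} (hv : 1 < ‖v‖) (hζ : ‖ζ‖ ≤ 1) :
    ‖v - ζ‖ < ‖(R : ℂ) * v - ζ‖ := by
  refine (sq_lt_sq₀ (norm_nonneg _) (norm_nonneg _)).mp ?_
  have h1 : 1 < Complex.normSq v := by rw [Complex.normSq_eq_norm_sq]; nlinarith
  have h2 : Complex.normSq ζ ≤ 1 := by rw [Complex.normSq_eq_norm_sq]; nlinarith [norm_nonneg ζ]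
  simp only [Complex.normSq_apply] at h1 h2
  simp only [← Complex.normSq_eq_norm_sq, Complex.normSq_apply, Complex.sub_re, Complex.sub_im,
    Complex.mul_re, Complex.mul_im, Complex.ofReal_re, Complex.ofReal_im]
  nlinarith [sq_nonneg (v.re * ζ.im - v.im * ζ.re), sq_nonneg (v.re * ζ.re + v.im * ζ.im - 1),
    sq_nonneg (v.re * ζ.re + v.im * ζ.im + 1), mul_pos (sub_pos.mpr hR) (sub_pos.mpr hR)]

-- For `|w| > 1`, `ζ ↦ (|w|² - 1) / (w - ζ) - conj w` maps the closed unit disk into itself.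
theorem norm_sum_roots_inv_sub_mul_sub_le {f : ℂ[X]} (hroots : ∀ ζ ∈ f.roots, ‖ζ‖ ≤ 1) {w : ℂ}
    (hw : 1 < ‖w‖) :
    ‖(f.roots.map fun ζ => 1 / (w - ζ)).sum * (‖w‖ ^ 2 - 1 : ℝ) - f.natDegree * conj w‖ ≤
      f.natDegree := by
  set c : ℝ := ‖w‖ ^ 2 - 1
  have hc : (c : ℂ) = w * conj w - 1 := by
    rw [Complex.mul_conj, Complex.normSq_eq_norm_sq]; push_cast [c]; ring
  have hroot : ∀ ζ ∈ f.roots, ‖1 / (w - ζ) * c - conj w‖ ≤ 1 := by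
    intro ζ hζ
    have hwζ : w - ζ ≠ 0 := sub_ne_zero.mpr fun h => (hroots ζ hζ).not_gt (h ▸ hw)
    have : 1 / (w - ζ) * c - conj w = -(1 - conj w * ζ) / (w - ζ) := by
      rw [hc]; field_simp; ring
    rw [this, norm_div, norm_neg, div_le_one (norm_pos_iff.mpr hwζ)]
    exact norm_one_sub_conj_mul_le_norm_sub hw.le (hroots ζ hζ)
  rw [← Multiset.sum_map_mul_right, ← IsAlgClosed.card_roots_eq_natDegree, ← nsmul_eq_mul,
    ← Multiset.sum_replicate, ← Multiset.map_const', ← Multiset.sum_map_sub]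
  refine (norm_multiset_sum_le _).trans ?_
  rw [Multiset.map_map]
  refine (Multiset.sum_le_card_nsmul _ 1 ?_).trans (by simp)
  simp only [Multiset.mem_map]
  rintro _ ⟨ζ, hζ, rfl⟩
  exact hroot ζ hζ

-- Laguerre's theorem: up to the factor `-a`, this is the polar derivative of `f` with respect
-- to `-1/a`, which lies outside the closed unit disk.
theorem eval_polar_derivative_ne_zero {f : ℂ[X]} (hf : 0 < f.natDegree)
    (hf0 : ∀ ζ : ℂ, 1 < ‖ζ‖ → f.eval ζ ≠ 0) {a w : ℂ} (ha : ‖a‖ < 1) (hw : 1 < ‖w‖) :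
    (1 + a * w) * (derivative f).eval w - f.natDegree * a * f.eval w ≠ 0 := by
  set n := f.natDegree
  have hroots : ∀ ζ ∈ f.roots, ‖ζ‖ ≤ 1 := fun ζ hζ =>
    not_lt.mp fun h => hf0 ζ h (mem_roots'.mp hζ).2
  have hsum := norm_sum_roots_inv_sub_mul_sub_le hroots hw
  set S := (f.roots.map fun ζ => 1 / (w - ζ)).sum
  have hS : (derivative f).eval w = f.eval w * S :=
    (IsAlgClosed.splits f).eval_derivative_eq_eval_mul_sum (hf0 w hw)
  intro h
  have hSa : (1 + a * w) * S = n * a :=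
    mul_left_cancel₀ (hf0 w hw) (by rw [hS] at h; linear_combination h)
  have hc : ((‖w‖ ^ 2 - 1 : ℝ) : ℂ) = w * conj w - 1 := by
    rw [Complex.mul_conj, Complex.normSq_eq_norm_sq]; push_cast; ring
  have key : (S * (‖w‖ ^ 2 - 1 : ℝ) - n * conj w) * (1 + a * w) = -(n * (conj w + a)) := by
    linear_combination ((‖w‖ ^ 2 - 1 : ℝ) : ℂ) * hSa + (n * a : ℂ) * hc
  have hlt : ‖1 + a * w‖ < ‖conj w + a‖ := by
    have := norm_one_sub_conj_mul_lt_norm_sub (v := conj w) (ζ := -a)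
      (by rwa [Complex.norm_conj]) (by rwa [norm_neg])
    simpa [mul_comm] using this
  have hn : (0 : ℝ) < n := by exact_mod_cast hf
  have hnorm := congrArg norm key
  rw [norm_mul, norm_neg, norm_mul, Complex.norm_natCast] at hnorm
  nlinarith [mul_le_mul_of_nonneg_right hsum (norm_nonneg (1 + a * w))]

noncomputable def dilationSub (R β : ℂ) (f : ℂ[X]) : ℂ[X] :=
  f.comp (C R * X) - C β * f

@[simp]
theorem eval_dilationSub (R β : ℂ) (f : ℂ[X]) (z : ℂ) :
    (dilationSub R β f).eval z = f.eval (R * z) - β * f.eval z := by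
  simp [dilationSub]

@[simp]
theorem eval_derivative_dilationSub (R β : ℂ) (f : ℂ[X]) (z : ℂ) :
    (derivative (dilationSub R β f)).eval z =
      R * (derivative f).eval (R * z) - β * (derivative f).eval z := by
  simp [dilationSub, derivative_comp]

theorem coeff_dilationSub (R β : ℂ) (f : ℂ[X]) (k : ℕ) :
    (dilationSub R β f).coeff k = (R ^ k - β) * f.coeff k := by
  rw [dilationSub, coeff_sub, comp_C_mul_X_coeff, coeff_C_mul]
  ring

theorem norm_eval_lt_norm_eval_mul {f : ℂ[X]} (hf : 0 < f.natDegree)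
    (hf0 : ∀ ζ : ℂ, 1 < ‖ζ‖ → f.eval ζ ≠ 0) {R : ℝ} (hR : 1 < R) {v : ℂ} (hv : 1 < ‖v‖) :
    ‖f.eval v‖ < ‖f.eval (R * v)‖ := by
  have hroots : f.roots ≠ 0 := by
    rw [← Multiset.card_pos, IsAlgClosed.card_roots_eq_natDegree]; exact hf
  have hlead : 0 < ‖f.leadingCoeff‖ :=
    norm_pos_iff.mpr (leadingCoeff_ne_zero.mpr (ne_zero_of_natDegree_gt hf))
  have hroot : ∀ ζ ∈ f.roots, ‖ζ‖ ≤ 1 := fun ζ hζ =>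
    not_lt.mp fun h => hf0 ζ h (mem_roots'.mp hζ).2
  simp only [(IsAlgClosed.splits f).eval_eq_prod_roots, norm_mul, norm_multiset_prod,
    Multiset.map_map, Function.comp_def]
  refine mul_lt_mul_of_pos_left (Multiset.prod_map_lt_prod_map hroots _ _ (fun ζ hζ => ?_)
    (fun ζ hζ => norm_sub_lt_norm_mul_sub hR hv (hroot ζ hζ))) hlead
  exact norm_pos_iff.mpr (sub_ne_zero.mpr fun h => (hroot ζ hζ).not_gt (h ▸ hv))

theorem ofReal_pow_sub_ne_zero {R : ℝ} (hR : 1 < R) {β : ℂ} (hβ : ‖β‖ ≤ 1) {k : ℕ}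
    (hk : k ≠ 0) : (R : ℂ) ^ k - β ≠ 0 := by
  rw [sub_ne_zero]
  intro h
  have : ‖(R : ℂ) ^ k‖ = R ^ k := by
    rw [norm_pow, Complex.norm_real, Real.norm_of_nonneg (by linarith)]
  linarith [one_lt_pow₀ hR hk, h ▸ this]

theorem natDegree_dilationSub {f : ℂ[X]} (hf : 0 < f.natDegree) {R : ℝ} (hR : 1 < R) {β : ℂ}
    (hβ : ‖β‖ ≤ 1) : (dilationSub R β f).natDegree = f.natDegree := by
  refine le_antisymm (natDegree_le_iff_coeff_eq_zero.mpr fun k hk => ?_)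
    (le_natDegree_of_ne_zero ?_)
  · rw [coeff_dilationSub, coeff_eq_zero_of_natDegree_lt hk, mul_zero]
  · rw [coeff_dilationSub]
    exact mul_ne_zero (ofReal_pow_sub_ne_zero hR hβ hf.ne')
      (leadingCoeff_ne_zero.mpr (ne_zero_of_natDegree_gt hf))

theorem eval_dilationSub_ne_zero {f : ℂ[X]} (hf : 0 < f.natDegree)
    (hf0 : ∀ ζ : ℂ, 1 < ‖ζ‖ → f.eval ζ ≠ 0) {R : ℝ} (hR : 1 < R) {β : ℂ} (hβ : ‖β‖ ≤ 1)
    {v : ℂ} (hv : 1 < ‖v‖) : (dilationSub R β f).eval v ≠ 0 := by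
  have hlt := norm_eval_lt_norm_eval_mul hf hf0 hR hv
  rw [eval_dilationSub, sub_ne_zero]
  intro h
  rw [h, norm_mul] at hlt
  nlinarith [norm_nonneg (f.eval v)]

noncomputable def dilatedPolar (R β a : ℂ) (n : ℕ) (f : ℂ[X]) (z : ℂ) : ℂ :=
  (1 + a * z) * (R * (derivative f).eval (R * z) - β * (derivative f).eval z) -
    n * a * (f.eval (R * z) - β * f.eval z)

theorem dilatedPolar_eq (R β a : ℂ) (n : ℕ) (f : ℂ[X]) (z : ℂ) :
    dilatedPolar R β a n f z =
      (1 + a * z) * (derivative (dilationSub R β f)).eval z -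
        n * a * (dilationSub R β f).eval z := by
  rw [dilatedPolar, eval_derivative_dilationSub, eval_dilationSub]

theorem dilatedPolar_sub (R β a : ℂ) (n : ℕ) (f g : ℂ[X]) (z : ℂ) :
    dilatedPolar R β a n (f - g) z = dilatedPolar R β a n f z - dilatedPolar R β a n g z := by
  simp only [dilatedPolar, derivative_sub, eval_sub]
  ring

theorem dilatedPolar_C_mul (R β a : ℂ) (n : ℕ) (c : ℂ) (f : ℂ[X]) (z : ℂ) :
    dilatedPolar R β a n (C c * f) z = c * dilatedPolar R β a n f z := by
  simp only [dilatedPolar, derivative_C_mul, eval_mul, eval_C]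
  ring

theorem dilatedPolar_X_pow (R β a : ℂ) {n : ℕ} (hn : n ≠ 0) (z : ℂ) :
    dilatedPolar R β a n (X ^ n) z = n * (R ^ n - β) * z ^ (n - 1) := by
  obtain ⟨m, rfl⟩ := Nat.exists_eq_add_one_of_ne_zero hn
  simp only [dilatedPolar, derivative_X_pow, eval_mul, eval_pow, eval_X, eval_C,
    Nat.add_sub_cancel]
  push_cast
  ring

theorem dilatedPolar_one (R β a : ℂ) (n : ℕ) (z : ℂ) :
    dilatedPolar R β a n 1 z = -(n * a * (1 - β)) := by
  simp [dilatedPolar]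

theorem dilatedPolar_ne_zero {f : ℂ[X]} (hf : 0 < f.natDegree)
    (hf0 : ∀ ζ : ℂ, 1 < ‖ζ‖ → f.eval ζ ≠ 0) {R : ℝ} (hR : 1 < R) {β a z : ℂ}
    (hβ : ‖β‖ ≤ 1) (ha : ‖a‖ < 1) (hz : 1 < ‖z‖) :
    dilatedPolar R β a f.natDegree f z ≠ 0 := by
  have hW := natDegree_dilationSub hf hR hβ
  rw [dilatedPolar_eq, ← hW]
  exact eval_polar_derivative_ne_zero (hW ▸ hf)
    (fun ζ hζ => eval_dilationSub_ne_zero hf hf0 hR hβ hζ) ha hz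

noncomputable def conjReverse (n : ℕ) (f : ℂ[X]) : ℂ[X] :=
  (f.reflect n).map (starRingEnd ℂ)

theorem coeff_conjReverse {n k : ℕ} (f : ℂ[X]) (hk : k ≤ n) :
    (conjReverse n f).coeff k = conj (f.coeff (n - k)) := by
  simp [conjReverse, coeff_reflect, revAt_le hk]

theorem natDegree_conjReverse_le {n : ℕ} {f : ℂ[X]} (hf : f.natDegree ≤ n) :
    (conjReverse n f).natDegree ≤ n :=
  natDegree_map_le.trans (natDegree_reflect_le.trans (max_le le_rfl hf))

theorem natDegree_conjReverse {n : ℕ} {f : ℂ[X]} (hf : f.natDegree ≤ n) (h0 : f.coeff 0 ≠ 0) :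
    (conjReverse n f).natDegree = n := by
  refine le_antisymm (natDegree_conjReverse_le hf) (le_natDegree_of_ne_zero ?_)
  rw [coeff_conjReverse f le_rfl, Nat.sub_self]
  simpa using h0

@[simp]
theorem conjReverse_conjReverse (n : ℕ) (f : ℂ[X]) : conjReverse n (conjReverse n f) = f := by
  ext k
  simp [conjReverse, coeff_reflect]

theorem conjReverse_sub (n : ℕ) (f g : ℂ[X]) :
    conjReverse n (f - g) = conjReverse n f - conjReverse n g := by
  simp [conjReverse, reflect_sub]

theorem conjReverse_C (n : ℕ) (c : ℂ) : conjReverse n (C c) = C (conj c) * X ^ n := by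
  simp [conjReverse, reflect_C]

theorem eval_conjReverse {n : ℕ} {f : ℂ[X]} (hf : f.natDegree ≤ n) {v : ℂ} (hv : v ≠ 0) :
    (conjReverse n f).eval v = v ^ n * conj (f.eval (conj v)⁻¹) := by
  let := invertibleOfNonzero (inv_ne_zero hv)
  have h := eval₂_reflect_mul_pow (starRingEnd ℂ) v⁻¹ n f hf
  rw [invOf_eq_inv, inv_inv, show v⁻¹ = conj (conj v)⁻¹ by simp, eval₂_at_apply] at h
  rw [conjReverse, eval_map, ← h, map_inv₀, Complex.conj_conj, mul_left_comm, ← mul_pow,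
    mul_inv_cancel₀ hv, one_pow, mul_one]

theorem norm_eval_le_norm_eval_conjReverse {n : ℕ} {f : ℂ[X]} (hf : f.natDegree = n)
    (hf0 : ∀ ζ : ℂ, ‖ζ‖ < 1 → f.eval ζ ≠ 0) {v : ℂ} (hv : 1 ≤ ‖v‖) :
    ‖f.eval v‖ ≤ ‖(conjReverse n f).eval v‖ := by
  have hv0 : v ≠ 0 := norm_pos_iff.mp (by linarith)
  have hroot : ∀ ζ ∈ f.roots, 1 ≤ ‖ζ‖ := fun ζ hζ =>
    not_lt.mp fun h => hf0 ζ h (mem_roots'.mp hζ).2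
  have hsplit := IsAlgClosed.splits f
  rw [eval_conjReverse hf.le hv0, hsplit.eval_eq_prod_roots, hsplit.eval_eq_prod_roots, norm_mul,
    norm_mul, norm_pow, Complex.norm_conj, norm_mul, norm_multiset_prod,
    norm_multiset_prod, Multiset.map_map, Multiset.map_map, mul_left_comm]
  refine mul_le_mul_of_nonneg_left ?_ (norm_nonneg _)
  rw [← hf, ← IsAlgClosed.card_roots_eq_natDegree, ← Multiset.prod_replicate,
    ← Multiset.map_const', ← Multiset.prod_map_mul]
  refine Multiset.prod_map_le_prod_map₀ _ _ (fun _ _ => norm_nonneg _) fun ζ hζ => ?_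
  calc ‖v - ζ‖ ≤ ‖1 - conj v * ζ‖ := norm_sub_le_norm_one_sub_conj_mul_s17 hv (hroot ζ hζ)
    _ = ‖v‖ * ‖(conj v)⁻¹ - ζ‖ := by
      rw [← Complex.norm_conj v, ← norm_mul, mul_sub, mul_inv_cancel₀ (by simpa using hv0)]

theorem norm_leadingCoeff_le_norm_coeff_zero {f : ℂ[X]}
    (hf0 : ∀ ζ : ℂ, ‖ζ‖ < 1 → f.eval ζ ≠ 0) : ‖f.leadingCoeff‖ ≤ ‖f.coeff 0‖ := by
  rw [coeff_zero_eq_eval_zero, (IsAlgClosed.splits f).eval_eq_prod_roots, norm_mul,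
    norm_multiset_prod, Multiset.map_map]
  refine le_mul_of_one_le_right (norm_nonneg _) (Multiset.one_le_prod_map fun ζ hζ => ?_)
  simpa using not_lt.mp fun h => hf0 ζ h (mem_roots'.mp hζ).2

theorem eval_conjReverse_ne_zero {n : ℕ} {f : ℂ[X]} (hf : f.natDegree ≤ n)
    (hf0 : ∀ ζ : ℂ, ‖ζ‖ < 1 → f.eval ζ ≠ 0) {v : ℂ} (hv : 1 < ‖v‖) :
    (conjReverse n f).eval v ≠ 0 := by
  have hv0 : v ≠ 0 := norm_pos_iff.mp (by linarith)
  rw [eval_conjReverse hf hv0]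
  refine mul_ne_zero (pow_ne_zero _ hv0) ((_root_.map_ne_zero _).mpr (hf0 _ ?_))
  rwa [norm_inv, Complex.norm_conj, inv_lt_one₀ (by linarith)]

theorem norm_eval_le_of_forall_norm_eq_one {f : ℂ[X]} {M : ℝ}
    (h : ∀ w : ℂ, ‖w‖ = 1 → ‖f.eval w‖ ≤ M) {w : ℂ} (hw : ‖w‖ ≤ 1) : ‖f.eval w‖ ≤ M := by
  refine Complex.norm_le_of_forall_mem_frontier_norm_le (isBounded_ball (x := 0) (r := 1))
    f.differentiable.diffContOnCl (fun ζ hζ => h ζ ?_) ?_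
  · rwa [frontier_ball (0 : ℂ) one_ne_zero, mem_sphere_zero_iff_norm] at hζ
  · rwa [closure_ball (0 : ℂ) one_ne_zero, mem_closedBall_zero_iff]

theorem norm_eval_le_maxSphere_of_norm_eq_one_s17 (f : ℂ[X]) {w : ℂ} (hw : ‖w‖ = 1) :
    ‖f.eval w‖ ≤ maxSphere f :=
  le_csSup ((isCompact_sphere 0 1).bddAbove_image (continuous_norm.comp f.continuous).continuousOn)
    ⟨w, mem_sphere_zero_iff_norm.mpr hw, rfl⟩

theorem norm_eval_le_maxSphere_s17 (f : ℂ[X]) {w : ℂ} (hw : ‖w‖ ≤ 1) : ‖f.eval w‖ ≤ maxSphere f :=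
  norm_eval_le_of_forall_norm_eq_one (fun _ => norm_eval_le_maxSphere_of_norm_eq_one_s17 f) hw

theorem maxSphere_pos {f : ℂ[X]} (hf0 : f.eval 0 ≠ 0) : 0 < maxSphere f :=
  (norm_pos_iff.mpr hf0).trans_le (norm_eval_le_maxSphere_s17 f (by simp))

theorem norm_eval_conjReverse_le_maxSphere {n : ℕ} {f : ℂ[X]} (hf : f.natDegree ≤ n) {w : ℂ}
    (hw : ‖w‖ ≤ 1) : ‖(conjReverse n f).eval w‖ ≤ maxSphere f := by
  refine norm_eval_le_of_forall_norm_eq_one (fun w hw => ?_) hw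
  have hw0 : w ≠ 0 := norm_ne_zero_iff.mp (by rw [hw]; exact one_ne_zero)
  rw [eval_conjReverse hf hw0, norm_mul, norm_pow, hw, one_pow, one_mul, Complex.norm_conj]
  exact norm_eval_le_maxSphere_of_norm_eq_one_s17 f (by rw [norm_inv, Complex.norm_conj, hw, inv_one])

theorem norm_eval_le_pow_mul_maxSphere {n : ℕ} {f : ℂ[X]} (hf : f.natDegree ≤ n) {v : ℂ}
    (hv : 1 ≤ ‖v‖) : ‖f.eval v‖ ≤ ‖v‖ ^ n * maxSphere f := by
  have hv0 : v ≠ 0 := norm_pos_iff.mp (by linarith)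
  conv_lhs => rw [← conjReverse_conjReverse n f]
  rw [eval_conjReverse (natDegree_conjReverse_le hf) hv0, norm_mul, norm_pow, Complex.norm_conj]
  refine mul_le_mul_of_nonneg_left (norm_eval_conjReverse_le_maxSphere hf ?_) (by positivity)
  rw [norm_inv, Complex.norm_conj]
  exact inv_le_one_of_one_le₀ hv

theorem norm_coeff_le_maxSphere {n : ℕ} {f : ℂ[X]} (hf : f.natDegree ≤ n) :
    ‖f.coeff n‖ ≤ maxSphere f := by
  have h := norm_eval_conjReverse_le_maxSphere hf (w := 0) (by simp)
  rwa [← coeff_zero_eq_eval_zero, coeff_conjReverse f (Nat.zero_le n), Nat.sub_zero,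
    Complex.norm_conj] at h

section Dominance

variable {n : ℕ} {R : ℝ} {β a z : ℂ}

theorem norm_dilatedPolar_le_of_dominated (hn : 0 < n) {f h : ℂ[X]} (hf : f.natDegree ≤ n)
    (hh : h.natDegree = n) (hcoeff : ‖f.coeff n‖ ≤ ‖h.coeff n‖)
    (hdom : ∀ ζ : ℂ, 1 < ‖ζ‖ → ‖f.eval ζ‖ ≤ ‖h.eval ζ‖)
    (hh0 : ∀ ζ : ℂ, 1 < ‖ζ‖ → h.eval ζ ≠ 0)
    (hR : 1 < R) (hβ : ‖β‖ ≤ 1) (ha : ‖a‖ < 1) (hz : 1 < ‖z‖) :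
    ‖dilatedPolar R β a n f z‖ ≤ ‖dilatedPolar R β a n h z‖ := by
  have hTh : dilatedPolar R β a n h z ≠ 0 := hh ▸ dilatedPolar_ne_zero (hh ▸ hn) hh0 hR hβ ha hz
  by_contra! hlt
  set c := dilatedPolar R β a n f z / dilatedPolar R β a n h z
  have hc : 1 < ‖c‖ := by rwa [norm_div, one_lt_div (norm_pos_iff.mpr hTh)]
  have hhn : 0 < ‖h.coeff n‖ :=
    norm_pos_iff.mpr (hh ▸ leadingCoeff_ne_zero.mpr (ne_zero_of_natDegree_gt (hh ▸ hn)))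
  have hg : (f - C c * h).natDegree = n := by
    refine le_antisymm ((natDegree_sub_le_of_le hf
      ((natDegree_C_mul_le _ _).trans hh.le)).trans (max_self n).le) (le_natDegree_of_ne_zero ?_)
    rw [coeff_sub, coeff_C_mul, sub_ne_zero]
    intro heq
    have := congrArg norm heq
    rw [norm_mul] at this
    nlinarith
  have hg0 : ∀ ζ : ℂ, 1 < ‖ζ‖ → (f - C c * h).eval ζ ≠ 0 := by
    intro ζ hζ heq
    rw [eval_sub, eval_mul, eval_C, sub_eq_zero] at heq
    have := hdom ζ hζ
    rw [heq, norm_mul] at this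
    nlinarith [norm_pos_iff.mpr (hh0 ζ hζ)]
  have hTg := dilatedPolar_ne_zero (hg ▸ hn) hg0 hR hβ ha hz
  rw [hg, dilatedPolar_sub, dilatedPolar_C_mul, div_mul_cancel₀ _ hTh, sub_self] at hTg
  exact hTg rfl

theorem norm_dilatedPolar_le_conjReverse (hn : 0 < n) {f : ℂ[X]} (hf : f.natDegree = n)
    (hf0 : ∀ ζ : ℂ, ‖ζ‖ < 1 → f.eval ζ ≠ 0)
    (hR : 1 < R) (hβ : ‖β‖ ≤ 1) (ha : ‖a‖ < 1) (hz : 1 < ‖z‖) :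
    ‖dilatedPolar R β a n f z‖ ≤ ‖dilatedPolar R β a n (conjReverse n f) z‖ := by
  have h0 : f.coeff 0 ≠ 0 := by rw [coeff_zero_eq_eval_zero]; exact hf0 0 (by simp)
  refine norm_dilatedPolar_le_of_dominated hn hf.le (natDegree_conjReverse hf.le h0) ?_
    (fun ζ hζ => norm_eval_le_norm_eval_conjReverse hf hf0 hζ.le)
    (fun ζ hζ => eval_conjReverse_ne_zero hf.le hf0 hζ) hR hβ ha hz
  rw [coeff_conjReverse f le_rfl, Nat.sub_self, Complex.norm_conj, ← hf]
  exact norm_leadingCoeff_le_norm_coeff_zero hf0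

theorem norm_dilatedPolar_le_maxSphere_mul (hn : 0 < n) {f : ℂ[X]} (hf : f.natDegree ≤ n)
    (hM : 0 < maxSphere f) (hR : 1 < R) (hβ : ‖β‖ ≤ 1) (ha : ‖a‖ < 1) (hz : 1 < ‖z‖) :
    ‖dilatedPolar R β a n f z‖ ≤ maxSphere f * ‖dilatedPolar R β a n (X ^ n) z‖ := by
  have hM' : (maxSphere f : ℂ) ≠ 0 := by exact_mod_cast hM.ne'
  have h := norm_dilatedPolar_le_of_dominated hn hf (natDegree_C_mul_X_pow n _ hM') ?_ ?_ ?_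
    hR hβ ha hz
  · rwa [dilatedPolar_C_mul, norm_mul, Complex.norm_real, Real.norm_of_nonneg hM.le] at h
  · rw [coeff_C_mul_X_pow, if_pos rfl, Complex.norm_real, Real.norm_of_nonneg hM.le]
    exact norm_coeff_le_maxSphere hf
  · intro ζ hζ
    rw [eval_mul, eval_C, eval_pow, eval_X, norm_mul, norm_pow, Complex.norm_real,
      Real.norm_of_nonneg hM.le, mul_comm]
    exact norm_eval_le_pow_mul_maxSphere hf hζ.le
  · intro ζ hζ
    rw [eval_mul, eval_C, eval_pow, eval_X]
    exact mul_ne_zero hM' (pow_ne_zero _ (norm_pos_iff.mp (by linarith)))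

end Dominance

theorem exists_norm_eq_and_norm_sub_mul_eq {u t : ℂ} (ht : t ≠ 0) {ρ : ℝ} (hu : ‖u‖ ≤ ρ * ‖t‖) :
    ∃ c : ℂ, ‖c‖ = ρ ∧ ‖u - c * t‖ = ρ * ‖t‖ - ‖u‖ := by
  have ht' : 0 < ‖t‖ := norm_pos_iff.mpr ht
  have hρ : 0 ≤ ρ := nonneg_of_mul_nonneg_left ((norm_nonneg u).trans hu) ht'
  set e := Complex.exp (u.arg * Complex.I)
  have he : ‖e‖ = 1 := Complex.norm_exp_ofReal_mul_I _
  refine ⟨(ρ * ‖t‖ : ℝ) * e / t, ?_, ?_⟩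
  · rw [norm_div, norm_mul, he, mul_one, Complex.norm_real, Real.norm_of_nonneg (by positivity),
      mul_div_cancel_right₀ _ ht'.ne']
  · conv_lhs => rw [div_mul_cancel₀ _ ht, ← Complex.norm_mul_exp_arg_mul_I u]
    rw [← sub_mul, norm_mul, he, mul_one, ← Complex.ofReal_sub, Complex.norm_real,
      Real.norm_of_nonpos (by linarith)]
    ring

section Extremal

variable {n : ℕ} {R : ℝ} {β a z : ℂ}

theorem norm_dilatedPolar_add_norm_dilatedPolar_conjReverse_le (hn : 0 < n) {f : ℂ[X]}
    (hf : f.natDegree = n) (hf0 : ∀ ζ : ℂ, ‖ζ‖ < 1 → f.eval ζ ≠ 0)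
    (hR : 1 < R) (hβ : ‖β‖ ≤ 1) (ha : ‖a‖ < 1) (hz : 1 < ‖z‖) {r : ℝ} (hr : 1 < r) :
    ‖dilatedPolar R β a n f z‖ + ‖dilatedPolar R β a n (conjReverse n f) z‖ ≤
      r * maxSphere f * (‖dilatedPolar R β a n (X ^ n) z‖ + ‖dilatedPolar R β a n 1 z‖) := by
  set M := maxSphere f
  set u := dilatedPolar R β a n f z
  set t := dilatedPolar R β a n (X ^ n) z
  have hM : 0 < M := maxSphere_pos (hf0 0 (by simp))
  have ht : t ≠ 0 := by
    simp only [t, dilatedPolar_X_pow _ _ _ hn.ne']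
    exact mul_ne_zero (mul_ne_zero (by exact_mod_cast hn.ne') (ofReal_pow_sub_ne_zero hR hβ hn.ne'))
      (pow_ne_zero _ (norm_pos_iff.mp (by linarith)))
  have hu : ‖u‖ ≤ M * ‖t‖ := norm_dilatedPolar_le_maxSphere_mul hn hf.le hM hR hβ ha hz
  obtain ⟨c, hc, hct⟩ := exists_norm_eq_and_norm_sub_mul_eq ht
    (by nlinarith [mul_nonneg hM.le (norm_nonneg t)] : ‖u‖ ≤ r * M * ‖t‖)
  have hg : (conjReverse n f - C (conj c) * 1).natDegree = n := by
    have h0 : f.coeff 0 ≠ 0 := by rw [coeff_zero_eq_eval_zero]; exact hf0 0 (by simp)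
    rw [mul_one]
    exact natDegree_sub_C.trans (natDegree_conjReverse hf.le h0)
  have hg0 : ∀ ζ : ℂ, ‖ζ‖ < 1 → (conjReverse n f - C (conj c) * 1).eval ζ ≠ 0 := by
    intro ζ hζ heq
    rw [mul_one, eval_sub, eval_C, sub_eq_zero] at heq
    have := norm_eval_conjReverse_le_maxSphere hf.le hζ.le
    rw [heq, Complex.norm_conj, hc] at this
    nlinarith
  have key := norm_dilatedPolar_le_conjReverse hn hg hg0 hR hβ ha hz
  rw [dilatedPolar_sub, dilatedPolar_C_mul, conjReverse_sub, mul_one, conjReverse_conjReverse,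
    conjReverse_C, Complex.conj_conj, dilatedPolar_sub, dilatedPolar_C_mul, hct] at key
  have hlhs : ‖dilatedPolar R β a n (conjReverse n f) z‖ - r * M * ‖dilatedPolar R β a n 1 z‖ ≤
      ‖dilatedPolar R β a n (conjReverse n f) z - conj c * dilatedPolar R β a n 1 z‖ := by
    rw [← hc, ← Complex.norm_conj c, ← norm_mul]
    exact norm_sub_norm_le _ _
  linarith

theorem two_mul_norm_dilatedPolar_le (hn : 0 < n) {f : ℂ[X]} (hf : f.natDegree = n)
    (hf0 : ∀ ζ : ℂ, ‖ζ‖ < 1 → f.eval ζ ≠ 0) (hR : 1 < R) (hβ : ‖β‖ ≤ 1) (ha : ‖a‖ < 1)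
    (hz : 1 < ‖z‖) :
    2 * ‖dilatedPolar R β a n f z‖ ≤
      maxSphere f * (‖dilatedPolar R β a n (X ^ n) z‖ + ‖dilatedPolar R β a n 1 z‖) := by
  have hsum : ‖dilatedPolar R β a n f z‖ + ‖dilatedPolar R β a n (conjReverse n f) z‖ ≤
      maxSphere f * (‖dilatedPolar R β a n (X ^ n) z‖ + ‖dilatedPolar R β a n 1 z‖) := by
    refine (le_iff_forall_one_lt_le_mul₀ ?_).mpr fun r hr => ?_
    · exact mul_nonneg (maxSphere_pos (hf0 0 (by simp))).le (by positivity)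
    · exact (norm_dilatedPolar_add_norm_dilatedPolar_conjReverse_le hn hf hf0 hR hβ ha hz
        hr).trans_eq (by ring)
  linarith [norm_dilatedPolar_le_conjReverse hn hf hf0 hR hβ ha hz]

theorem norm_dilatedPolar_le_of_one_lt_norm (hn : 0 < n) {f : ℂ[X]} (hf : f.natDegree = n)
    (hf0 : ∀ ζ : ℂ, ‖ζ‖ < 1 → f.eval ζ ≠ 0) (hR : 1 < R) (hβ : ‖β‖ ≤ 1) (ha : ‖a‖ < 1)
    (hz : 1 < ‖z‖) :
    ‖dilatedPolar R β a n f z‖ ≤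
      (n * ‖(R : ℂ) ^ n - β‖ * ‖z‖ ^ (n - 1) + n * ‖1 - β‖ * ‖a‖) / 2 * maxSphere f := by
  have h := two_mul_norm_dilatedPolar_le hn hf hf0 hR hβ ha hz
  rw [dilatedPolar_X_pow _ _ _ hn.ne', dilatedPolar_one] at h
  simp only [norm_neg, norm_mul, norm_pow, Complex.norm_natCast] at h
  linarith

end Extremal

theorem stmt_17 (n : ℕ) (P : Polynomial ℂ) (hP : P.natDegree = n)
    (hz : ∀ z : ℂ, ‖z‖ < 1 → P.eval z ≠ 0)
    (β a : ℂ) (hβ : ‖β‖ ≤ 1) (ha : ‖a‖ ≤ 1)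
    (R : ℝ) (hR : 1 < R) :
    ∀ z : ℂ, 1 ≤ ‖z‖ →
      ‖(1 + a * z) * (R * (derivative P).eval (R * z) - β * (derivative P).eval z) -
          n * a * (P.eval (R * z) - β * P.eval z)‖ ≤
        (n * ‖(R : ℂ) ^ n - β‖ * ‖z‖ ^ (n - 1) +
          n * ‖1 - β‖ * ‖a‖) / 2 * maxSphere P := by
  intro z hz1
  rcases Nat.eq_zero_or_pos n with rfl | hn
  · obtain ⟨c, rfl⟩ := natDegree_eq_zero.mp hP
    simp
  let lhs : ℝ → ℝ := fun s => ‖dilatedPolar R β ((1 - s : ℝ) * a) n P ((1 + s : ℝ) * z)‖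
  let rhs : ℝ → ℝ := fun s => (n * ‖(R : ℂ) ^ n - β‖ * ‖((1 + s : ℝ) : ℂ) * z‖ ^ (n - 1) +
      n * ‖1 - β‖ * ‖((1 - s : ℝ) : ℂ) * a‖) / 2 * maxSphere P
  have hle : ∀ s ∈ Ioo (0 : ℝ) 1, lhs s ≤ rhs s := by
    rintro s ⟨hs0, hs1⟩
    refine norm_dilatedPolar_le_of_one_lt_norm hn hP hz hR hβ ?_ ?_
    · rw [norm_mul, Complex.norm_real, Real.norm_of_nonneg (by linarith)]
      nlinarith [norm_nonneg a]
    · rw [norm_mul, Complex.norm_real, Real.norm_of_nonneg (by linarith)]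
      nlinarith
  have hlhs : Continuous lhs := by
    simp only [lhs, dilatedPolar]
    fun_prop
  have hrhs : Continuous rhs := by fun_prop
  have := le_of_tendsto_of_tendsto ((hlhs.tendsto 0).mono_left nhdsWithin_le_nhds)
    ((hrhs.tendsto 0).mono_left nhdsWithin_le_nhds)
    (Filter.eventually_of_mem (Ioo_mem_nhdsGT (zero_lt_one' ℝ)) hle)
  simpa [lhs, rhs, dilatedPolar] using this
end
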